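/- arXiv:2011.03101 — 3 statements merged into one kernel-verified Lean document; each statement's English description precedes it below -/
import Mathlib

section
/- For every nonnegative integer n, the sum over k from 0 to n of S(n,k) * (-1)^k * k! * H_k equals (-1)^n * n, where S(n,k) are Stirling numbers of the second kind and H_k is the k-th harmonic number. -/
/-- Stirling numbers of the second kind. -/
def S2 : ℕ → ℕ → ℕ
  | 0, 0 => 1
  | 0, _ + 1 => 0
  | _ + 1, 0 => 0
  | n + 1, k + 1 => (k + 1) * S2 n (k + 1) + S2 n k

lemma S2_eq_zero : ∀ n k, n < k → S2 n k = 0 := by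
  intro n
  induction n with
  | zero =>
    intro k hk
    cases k with
    | zero => omega
    | succ k => rfl
  | succ n ih =>
    intro k hk
    cases k with
    | zero => omega
    | succ k =>
      show (k + 1) * S2 n (k + 1) + S2 n k = 0
      rw [ih (k + 1) (by omega), ih k (by omega)]
      ring

lemma shift_sum (g : ℕ → ℚ) (n : ℕ) (h0 : g 0 = 0) (hn : g (n + 1) = 0) :
    ∑ k ∈ Finset.range (n + 1), g (k + 1) = ∑ k ∈ Finset.range (n + 1), g k := by
  have h1 := Finset.sum_range_succ' g (n + 1)
  have h2 := Finset.sum_range_succ g (n + 1)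
  rw [h0, add_zero] at h1
  rw [hn, add_zero] at h2
  rw [← h1, h2]

lemma sumB (n : ℕ) :
    ∑ k ∈ Finset.range (n + 1), (S2 n k : ℚ) * (-1) ^ k * (Nat.factorial k) = (-1) ^ n := by
  induction n with
  | zero => simp [S2]
  | succ n ih =>
    rw [Finset.sum_range_succ' _ (n + 1)]
    have h0 : (S2 (n + 1) 0 : ℚ) * (-1) ^ 0 * (Nat.factorial 0) = 0 := by
      show ((0 : ℕ) : ℚ) * (-1) ^ 0 * (Nat.factorial 0) = 0
      simp
    rw [h0, add_zero]
    set g : ℕ → ℚ := fun j => (j : ℚ) * (S2 n j : ℚ) * (-1) ^ j * (Nat.factorial j) with hgdef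
    have key : ∀ k ∈ Finset.range (n + 1),
        (S2 (n + 1) (k + 1) : ℚ) * (-1) ^ (k + 1) * (Nat.factorial (k + 1))
        = g (k + 1) - (((k : ℚ) + 1) * (S2 n k : ℚ) * (-1) ^ k * (Nat.factorial k)) := by
      intro k _
      have hrec : S2 (n + 1) (k + 1) = (k + 1) * S2 n (k + 1) + S2 n k := rfl
      rw [hrec, hgdef]
      simp only [Nat.factorial_succ]
      push_cast
      ring
    rw [Finset.sum_congr rfl key, Finset.sum_sub_distrib]
    rw [shift_sum g n (by simp [hgdef]) (by simp [hgdef, S2_eq_zero n (n + 1) (by omega)])]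
    rw [← Finset.sum_sub_distrib]
    have : ∑ k ∈ Finset.range (n + 1),
        (g k - ((k : ℚ) + 1) * (S2 n k : ℚ) * (-1) ^ k * (Nat.factorial k))
        = -∑ k ∈ Finset.range (n + 1), (S2 n k : ℚ) * (-1) ^ k * (Nat.factorial k) := by
      rw [← Finset.sum_neg_distrib]
      apply Finset.sum_congr rfl
      intro k _
      rw [hgdef]
      ring
    rw [this, ih]
    ring

theorem stirling2_harmonic_transform (n : ℕ) :
    ∑ k ∈ Finset.range (n + 1),
      (S2 n k : ℚ) * (-1) ^ k * (Nat.factorial k) * harmonic k = (-1) ^ n * n := by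
  induction n with
  | zero => simp [S2]
  | succ n ih =>
    rw [Finset.sum_range_succ' _ (n + 1)]
    have h0 : (S2 (n + 1) 0 : ℚ) * (-1) ^ 0 * (Nat.factorial 0) * harmonic 0 = 0 := by
      simp [harmonic]
    rw [h0, add_zero]
    set g : ℕ → ℚ := fun j => (j : ℚ) * (S2 n j : ℚ) * (-1) ^ j * (Nat.factorial j) * harmonic j
      with hgdef
    have key : ∀ k ∈ Finset.range (n + 1),
        (S2 (n + 1) (k + 1) : ℚ) * (-1) ^ (k + 1) * (Nat.factorial (k + 1)) * harmonic (k + 1)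
        = g (k + 1) - (((k : ℚ) + 1) * (S2 n k : ℚ) * (-1) ^ k * (Nat.factorial k) * harmonic k
            + (S2 n k : ℚ) * (-1) ^ k * (Nat.factorial k)) := by
      intro k _
      have hrec : S2 (n + 1) (k + 1) = (k + 1) * S2 n (k + 1) + S2 n k := rfl
      have hk1 : ((k : ℚ) + 1) ≠ 0 := by positivity
      rw [hrec, hgdef]
      simp only [Nat.factorial_succ, harmonic_succ]
      push_cast
      field_simp
      ring
    rw [Finset.sum_congr rfl key, Finset.sum_sub_distrib]
    rw [shift_sum g n (by simp [hgdef, harmonic]) (by simp [hgdef, S2_eq_zero n (n + 1) (by omega)])]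
    rw [← Finset.sum_sub_distrib]
    have hsplit : ∀ x ∈ Finset.range (n + 1),
        g x - ((↑x + 1) * ↑(S2 n x) * (-1) ^ x * ↑x.factorial * harmonic x
          + (S2 n x : ℚ) * (-1) ^ x * ↑x.factorial)
        = -((S2 n x : ℚ) * (-1) ^ x * ↑x.factorial * harmonic x)
          - (S2 n x : ℚ) * (-1) ^ x * ↑x.factorial := by
      intro x _
      rw [hgdef]
      ring
    rw [Finset.sum_congr rfl hsplit, Finset.sum_sub_distrib, Finset.sum_neg_distrib, ih, sumB n]
    push_cast
    ring
end

section
/- For every nonnegative integer n and real x, E_n(x) = sum over k from 0 to n of S(n,k) * k! * (sum over j from 0 to k of binomial(x,j) * (-1/2)^{k-j}), where E_n(x) is the n-th Euler polynomial. -/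
/-- The `n`-th Euler polynomial, defined via Bernoulli polynomials by the
identity `E_n(x) = (2/(n+1)) * (B_{n+1}(x) - 2^{n+1} B_{n+1}(x/2))`. -/
noncomputable def eulerPoly (n : ℕ) (x : ℝ) : ℝ :=
  (2 / (n + 1)) *
    ((Polynomial.aeval x) (Polynomial.bernoulli (n + 1)) -
      2 ^ (n + 1) * (Polynomial.aeval (x / 2)) (Polynomial.bernoulli (n + 1)))

/-- Generalized binomial coefficient `x(x-1)⋯(x-k+1)/k!` for real `x`. -/
noncomputable def genBinom (x : ℝ) (k : ℕ) : ℝ :=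
  (∏ i ∈ Finset.range k, (x - i)) / (Nat.factorial k)

/-!
Both sides `f` solve `f (x + 1) + f x = 2 * x ^ n`. For `eulerPoly n` this combines
`B_m (x + 1) = B_m x + m x ^ (m - 1)` with the duplication formula
`2 B_m (2x) = 2 ^ m (B_m x + B_m (x + 1/2))`, read off from the generating function
`t e^{xt} / (e^t - 1)`. On the right, the inner sum `eulerChoose k` solves the equation with
`2 * choose x k` in place of `2 * x ^ n`, and `x ^ n = ∑ S(n, k) k! choose x k`.
The difference `p` of the two sides is a polynomial with `p (x + 1) = -p x`, hence 2-periodic,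
hence constant, hence zero.
-/

section Bernoulli

open PowerSeries

variable {K : Type*} [Field K] [CharZero K]

theorem rescale_two_exp_sub_one_ne_zero : rescale (2 : K) (exp K) - 1 ≠ 0 := by
  intro h
  simpa [coeff_rescale, coeff_exp] using congrArg (coeff 1) h

theorem aeval_bernoulli_two_mul (m : ℕ) (x : K) :
    2 * Polynomial.aeval (2 * x) (Polynomial.bernoulli m) =
      2 ^ m * (Polynomial.aeval x (Polynomial.bernoulli m) +
        Polynomial.aeval (x + 1 / 2) (Polynomial.bernoulli m)) := by
  set G : K → K⟦X⟧ := fun t =>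
    mk fun n => Polynomial.aeval t ((1 / n.factorial : ℚ) • Polynomial.bernoulli n) with hG
  have hgf : ∀ t, G t * (exp K - 1) = X * rescale t (exp K) :=
    Polynomial.bernoulli_generating_function
  have hexp : ∀ a b : K, rescale a (exp K) * rescale b (exp K) = rescale (a + b) (exp K) :=
    exp_mul_exp_eq_exp_add
  have hexp_two : rescale (2 : K) (exp K) = exp K * exp K := by
    rw [← one_add_one_eq_two, ← hexp, rescale_one, RingHom.id_apply]
  -- multiplied by `e^{2X} - 1 = (e^X - 1)(e^X + 1)`, both sides become `2X (e^{2xX} + e^{(2x+1)X})`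
  have key : rescale 2 (G x + G (x + 1 / 2)) = C (2 : K) * G (2 * x) := by
    apply mul_right_cancel₀ (rescale_two_exp_sub_one_ne_zero (K := K))
    calc rescale 2 (G x + G (x + 1 / 2)) * (rescale 2 (exp K) - 1)
        = rescale 2 ((G x + G (x + 1 / 2)) * (exp K - 1)) := by simp
      _ = C (2 : K) * X * (rescale (2 * x) (exp K) + rescale (2 * x + 1) (exp K)) := by
        rw [add_mul, hgf, hgf]
        simp only [map_add, map_mul, rescale_X, rescale_rescale]
        ring_nf
      _ = C (2 : K) * (G (2 * x) * (exp K - 1)) * (exp K + 1) := by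
        rw [hgf, ← hexp (2 * x) 1, rescale_one, RingHom.id_apply]
        ring
      _ = C (2 : K) * G (2 * x) * (rescale 2 (exp K) - 1) := by
        rw [hexp_two]; ring
  have hm := congrArg (coeff m) key
  simp only [hG, coeff_rescale, map_add, coeff_C_mul, coeff_mk, map_smul, Rat.smul_def,
    Rat.cast_div, Rat.cast_one, Rat.cast_natCast] at hm
  refine mul_left_cancel₀ (one_div_ne_zero (Nat.cast_ne_zero.mpr m.factorial_ne_zero)) ?_
  linear_combination -hm

end Bernoulli

theorem aeval_bernoulli_add_one {A : Type*} [CommRing A] [Algebra ℚ A] (m : ℕ) (x : A) :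
    Polynomial.aeval (x + 1) (Polynomial.bernoulli m) =
      Polynomial.aeval x (Polynomial.bernoulli m) + m * x ^ (m - 1) := by
  simpa [Polynomial.aeval_comp, add_comm] using
    congrArg (Polynomial.aeval x) (Polynomial.bernoulli_comp_one_add_X m)

theorem eulerPoly_add_one_add_self (n : ℕ) (x : ℝ) :
    eulerPoly n (x + 1) + eulerPoly n x = 2 * x ^ n := by
  have hshift := aeval_bernoulli_add_one (n + 1) x
  have hdup := aeval_bernoulli_two_mul (n + 1) (x / 2)
  rw [Nat.add_sub_cancel] at hshift
  rw [mul_div_cancel₀ x two_ne_zero, ← add_div] at hdup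
  rw [eulerPoly, eulerPoly, hshift]
  field_simp
  push_cast
  linear_combination hdup

open Polynomial Finset

theorem S2_eq_stirlingSecond : S2 = Nat.stirlingSecond := by
  funext n k
  induction n generalizing k with
  | zero => cases k <;> rfl
  | succ n ih => cases k <;> simp [S2, Nat.stirlingSecond_succ_succ, ih]

theorem X_mul_descPochhammer (R : Type*) [CommRing R] (k : ℕ) :
    X * descPochhammer R k = descPochhammer R (k + 1) + (k : R[X]) * descPochhammer R k := by
  rw [descPochhammer_succ_right]; ring

theorem X_pow_eq_sum_stirlingSecond_mul_descPochhammer (R : Type*) [CommRing R] (n : ℕ) :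
    (X : R[X]) ^ n = ∑ k ∈ range (n + 1), (n.stirlingSecond k : R[X]) * descPochhammer R k := by
  induction n with
  | zero => simp
  | succ n ih =>
    have hshift : ∑ k ∈ range (n + 1), (n.stirlingSecond k : R[X]) * (k * descPochhammer R k) =
        ∑ k ∈ range (n + 1),
          ((k + 1) * n.stirlingSecond (k + 1) : R[X]) * descPochhammer R (k + 1) := by
      rw [sum_range_succ' _ n, sum_range_succ _ n, Nat.stirlingSecond_eq_zero_of_lt n.lt_succ_self]
      simp only [Nat.cast_zero, mul_zero, zero_mul, add_zero]
      refine sum_congr rfl fun k _ => ?_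
      push_cast; ring
    calc (X : R[X]) ^ (n + 1)
        = ∑ k ∈ range (n + 1), (n.stirlingSecond k : R[X]) * (X * descPochhammer R k) := by
          rw [pow_succ', ih, mul_sum]
          exact sum_congr rfl fun k _ => mul_left_comm _ _ _
      _ = ∑ k ∈ range (n + 1),
            ((n + 1).stirlingSecond (k + 1) : R[X]) * descPochhammer R (k + 1) := by
          simp_rw [X_mul_descPochhammer, mul_add, sum_add_distrib]
          rw [hshift, ← sum_add_distrib]
          refine sum_congr rfl fun k _ => ?_
          rw [Nat.stirlingSecond_succ_succ]
          push_cast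
          ring
      _ = _ := by
          rw [sum_range_succ' _ (n + 1), Nat.stirlingSecond_succ_zero, Nat.cast_zero, zero_mul,
            add_zero]

section EulerChoose

variable {K : Type*} [Field K] [CharZero K]

theorem Ring.choose_eq_inv_factorial_mul_eval_descPochhammer (x : K) (k : ℕ) :
    Ring.choose x k = (k.factorial : K)⁻¹ * (descPochhammer K k).eval x := by
  rw [Ring.choose_eq_smul, ← aeval_eq_smeval, aeval_def, eval₂_eq_eval_map, descPochhammer_map,
    smul_eq_mul]

theorem pow_eq_sum_stirlingSecond_mul_factorial_mul_choose (n : ℕ) (x : K) :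
    x ^ n = ∑ k ∈ range (n + 1), (n.stirlingSecond k : K) * k.factorial * Ring.choose x k := by
  have h := congrArg (eval x) (X_pow_eq_sum_stirlingSecond_mul_descPochhammer K n)
  rw [eval_pow, eval_X, eval_finsetSum] at h
  rw [h]
  refine sum_congr rfl fun k _ => ?_
  rw [eval_mul, eval_natCast, Ring.choose_eq_inv_factorial_mul_eval_descPochhammer, mul_assoc,
    mul_inv_cancel_left₀ (Nat.cast_ne_zero.mpr k.factorial_ne_zero)]

noncomputable def eulerChoose (k : ℕ) (x : K) : K :=
  ∑ j ∈ range (k + 1), Ring.choose x j * (-1 / 2) ^ (k - j)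

theorem eulerChoose_zero (x : K) : eulerChoose 0 x = 1 := by
  simp [eulerChoose]

theorem eulerChoose_succ (k : ℕ) (x : K) :
    eulerChoose (k + 1) x = Ring.choose x (k + 1) - eulerChoose k x / 2 := by
  have hterm : ∀ j ∈ range (k + 1), Ring.choose x j * (-1 / 2 : K) ^ (k + 1 - j) =
      -(Ring.choose x j * (-1 / 2) ^ (k - j)) / 2 := fun j hj => by
    rw [Nat.sub_add_comm (mem_range_succ_iff.mp hj), pow_succ]; ring
  rw [eulerChoose, sum_range_succ, sum_congr rfl hterm, ← sum_div, sum_neg_distrib, eulerChoose,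
    Nat.sub_self, pow_zero, mul_one]
  ring

theorem eulerChoose_add_one_add_self (k : ℕ) (x : K) :
    eulerChoose k (x + 1) + eulerChoose k x = 2 * Ring.choose x k := by
  induction k with
  | zero => rw [eulerChoose_zero, eulerChoose_zero, Ring.choose_zero_right]; norm_num
  | succ k ih =>
    rw [eulerChoose_succ, eulerChoose_succ, Ring.choose_succ_succ]
    linear_combination -ih / 2

noncomputable def stirlingEulerSum (n : ℕ) (x : K) : K :=
  ∑ k ∈ range (n + 1), (n.stirlingSecond k : K) * k.factorial * eulerChoose k x

theorem stirlingEulerSum_add_one_add_self (n : ℕ) (x : K) :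
    stirlingEulerSum n (x + 1) + stirlingEulerSum n x = 2 * x ^ n := by
  rw [stirlingEulerSum, stirlingEulerSum, ← sum_add_distrib,
    pow_eq_sum_stirlingSecond_mul_factorial_mul_choose, mul_sum]
  refine sum_congr rfl fun k _ => ?_
  rw [← mul_add, eulerChoose_add_one_add_self]
  ring

end EulerChoose

theorem genBinom_eq_choose (x : ℝ) (k : ℕ) : genBinom x k = Ring.choose x k := by
  rw [Ring.choose_eq_inv_factorial_mul_eval_descPochhammer, descPochhammer_eval_eq_prod_range,
    genBinom, div_eq_inv_mul]

theorem Polynomial.eq_zero_of_eval_add_one_eq_neg {R : Type*} [CommRing R] [IsDomain R]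
    [CharZero R] {p : R[X]} (h : ∀ x, p.eval (x + 1) = -p.eval x) : p = 0 := by
  have hperiodic : ∀ k : ℕ, p.eval (2 * (k : R)) = p.eval 0 := by
    intro k
    induction k with
    | zero => simp
    | succ k ih =>
      rw [← ih, Nat.cast_succ, show 2 * ((k : R) + 1) = 2 * k + 1 + 1 by ring, h, h, neg_neg]
  have hconst : p = C (p.eval 0) := by
    refine eq_of_infinite_eval_eq _ _ (Set.infinite_of_injective_forall_mem (f := fun k : ℕ =>
      (2 * k : R)) (fun a b hab => ?_) fun k => by simp [hperiodic])
    exact Nat.cast_injective (mul_left_cancel₀ two_ne_zero hab)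
  have h0 := h 0
  rw [hconst, eval_C, eval_C, self_eq_neg] at h0
  rw [hconst, h0, C_0]

theorem exists_eval_eq_eulerPoly_sub_stirlingEulerSum (n : ℕ) :
    ∃ p : ℝ[X], ∀ x, p.eval x = eulerPoly n x - stirlingEulerSum n x := by
  let B : ℝ[X] := (Polynomial.bernoulli (n + 1)).map (algebraMap ℚ ℝ)
  refine ⟨C (2 / (n + 1 : ℝ)) * (B - C (2 ^ (n + 1)) * B.comp (C (1 / 2) * X)) -
    ∑ k ∈ range (n + 1), C ((n.stirlingSecond k : ℝ) * k.factorial) *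
      ∑ j ∈ range (k + 1),
        C (j.factorial : ℝ)⁻¹ * descPochhammer ℝ j * C ((-1 / 2) ^ (k - j)),
    fun x => ?_⟩
  simp only [B, eulerPoly, stirlingEulerSum, eulerChoose, eval_sub, eval_mul, eval_C, eval_comp,
    eval_X, eval_finsetSum, eval_map_algebraMap, one_div_mul_eq_div,
    Ring.choose_eq_inv_factorial_mul_eval_descPochhammer]

theorem euler_poly_eq_stirling2_sum (n : ℕ) (x : ℝ) :
    eulerPoly n x =
      ∑ k ∈ Finset.range (n + 1),
        (S2 n k : ℝ) * (Nat.factorial k) *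
          ∑ j ∈ Finset.range (k + 1), genBinom x j * (-1 / 2 : ℝ) ^ (k - j) := by
  simp only [genBinom_eq_choose, S2_eq_stirlingSecond]
  change eulerPoly n x = stirlingEulerSum n x
  rw [← sub_eq_zero]
  obtain ⟨p, hp⟩ := exists_eval_eq_eulerPoly_sub_stirlingEulerSum n
  have hp0 : p = 0 := eq_zero_of_eval_add_one_eq_neg fun y => by
    rw [hp, hp]
    linear_combination eulerPoly_add_one_add_self n y - stirlingEulerSum_add_one_add_self n y
  rw [← hp, hp0, eval_zero]
end

section
/- For every nonnegative integer n, the Bernoulli number B_n equals sum over k from 0 to n of S(n,k) * k! * (-1)^k / (k+1). -/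
lemma S2_zero_right (n : ℕ) : S2 (n + 1) 0 = 0 := rfl

lemma S2_succ_succ (n k : ℕ) : S2 (n+1) (k+1) = (k + 1) * S2 n (k + 1) + S2 n k := rfl

lemma stirling_binom : ∀ n k, (∑ j ∈ Finset.range (n+1), (n.choose j) * S2 j k) = S2 (n+1) (k+1) := by
  intro n
  induction n with
  | zero =>
    intro k
    cases k <;> simp [S2]
  | succ n ih =>
    have D : ∀ k, (∑ j ∈ Finset.range (n+1), (n.choose j) * S2 (j+1) k)
        = k * S2 (n+1) (k+1) + S2 (n+1) k := by
      intro k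
      cases k with
      | zero => simp [S2_zero_right]
      | succ k =>
        calc ∑ j ∈ Finset.range (n+1), (n.choose j) * S2 (j+1) (k+1)
            = ∑ j ∈ Finset.range (n+1),
                ((k+1) * ((n.choose j) * S2 j (k+1)) + (n.choose j) * S2 j k) := by
              apply Finset.sum_congr rfl; intro j _; rw [S2_succ_succ]; ring
          _ = (k+1) * (∑ j ∈ Finset.range (n+1), (n.choose j) * S2 j (k+1))
                + ∑ j ∈ Finset.range (n+1), (n.choose j) * S2 j k := by
              rw [Finset.sum_add_distrib, Finset.mul_sum]
          _ = (k+1) * S2 (n+1) (k+2) + S2 (n+1) (k+1) := by rw [ih, ih]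
    intro k
    calc ∑ j ∈ Finset.range (n+2), ((n+1).choose j) * S2 j k
        = (∑ j ∈ Finset.range (n+1), ((n+1).choose (j+1)) * S2 (j+1) k)
            + ((n+1).choose 0) * S2 0 k := Finset.sum_range_succ' _ _
      _ = (∑ j ∈ Finset.range (n+1),
            ((n.choose j) * S2 (j+1) k + (n.choose (j+1)) * S2 (j+1) k)) + S2 0 k := by
          rw [Nat.choose_zero_right, one_mul]
          congr 1
          apply Finset.sum_congr rfl; intro j _
          rw [Nat.choose_succ_succ, Nat.add_mul]
      _ = (∑ j ∈ Finset.range (n+1), (n.choose j) * S2 (j+1) k)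
            + ((∑ j ∈ Finset.range (n+1), (n.choose (j+1)) * S2 (j+1) k) + (n.choose 0) * S2 0 k) := by
          rw [Finset.sum_add_distrib, Nat.choose_zero_right, one_mul]; ring
      _ = (k * S2 (n+1) (k+1) + S2 (n+1) k)
            + (∑ j ∈ Finset.range (n+2), (n.choose j) * S2 j k) := by
          rw [D, ← Finset.sum_range_succ' (fun j => (n.choose j) * S2 j k)]
      _ = (k * S2 (n+1) (k+1) + S2 (n+1) k)
            + ((∑ j ∈ Finset.range (n+1), (n.choose j) * S2 j k) + (n.choose (n+1)) * S2 (n+1) k) := by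
          rw [Finset.sum_range_succ]
      _ = S2 (n+2) (k+1) := by
          rw [Nat.choose_succ_self, zero_mul, add_zero, ih]
          rw [show S2 (n+2) (k+1) = (k+1) * S2 (n+1) (k+1) + S2 (n+1) k from rfl]
          ring

lemma stirling_binom' (n k : ℕ) :
    (∑ j ∈ Finset.range (n+1), ((n+1).choose j) * S2 j k) = (k+1) * S2 (n+1) (k+1) := by
  have h := stirling_binom (n+1) k
  rw [Finset.sum_range_succ, Nat.choose_self, one_mul, S2_succ_succ] at h
  omega

lemma cancel (n : ℕ) (hn : 1 ≤ n) :
    ∑ k ∈ Finset.range (n+2), (-1:ℚ)^k * (k.factorial) * S2 (n+1) (k+1) = 0 := by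
  set f : ℕ → ℚ := fun k => (-1:ℚ)^k * (k.factorial) * S2 n k with hf
  have hsplit : ∀ k, (-1:ℚ)^k * (k.factorial) * S2 (n+1) (k+1) = -f (k+1) + f k := by
    intro k
    rw [S2_succ_succ]
    simp only [hf]
    push_cast [Nat.factorial_succ]
    ring
  rw [Finset.sum_congr rfl (fun k _ => hsplit k), Finset.sum_add_distrib]
  have h1 : ∑ k ∈ Finset.range (n+2), -f (k+1) = -∑ k ∈ Finset.range (n+2), f (k+1) := by
    rw [Finset.sum_neg_distrib]
  have h2 : ∑ k ∈ Finset.range (n+2), f (k+1) = ∑ k ∈ Finset.range (n+2), f k := by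
    have h3 : ∑ k ∈ Finset.range (n+3), f k
        = (∑ k ∈ Finset.range (n+2), f (k+1)) + f 0 := Finset.sum_range_succ' f _
    have hf0 : f 0 = 0 := by
      simp only [hf]
      obtain ⟨m, rfl⟩ := Nat.exists_eq_add_of_le hn
      simp [S2_zero_right, add_comm]
    have hftop : f (n+2) = 0 := by
      simp only [hf, S2_eq_zero n (n+2) (by omega)]
      push_cast; ring
    rw [Finset.sum_range_succ, hftop, add_zero] at h3
    rw [hf0, add_zero] at h3
    exact h3.symm
  rw [h1, h2]
  ring

noncomputable def Tb (n : ℕ) : ℚ :=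
  ∑ k ∈ Finset.range (n + 1), (S2 n k : ℚ) * (Nat.factorial k) * (-1) ^ k / (k + 1)

lemma sum_Tb (m : ℕ) :
    ∑ j ∈ Finset.range m, (m.choose j : ℚ) * Tb j = if m = 1 then 1 else 0 := by
  match m with
  | 0 => simp
  | n + 1 =>
    have hext : ∀ j ∈ Finset.range (n+1),
        (((n+1).choose j : ℚ)) * Tb j
          = ∑ k ∈ Finset.range (n+1),
              ((n+1).choose j : ℚ) * ((S2 j k : ℚ) * (Nat.factorial k) * (-1) ^ k / (k + 1)) := by
      intro j hj
      rw [Finset.mem_range] at hj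
      rw [Tb, Finset.mul_sum]
      apply Finset.sum_subset
      · intro x hx
        rw [Finset.mem_range] at *
        omega
      · intro x _ hx
        rw [Finset.mem_range] at hx
        rw [S2_eq_zero j x (by omega)]
        push_cast; ring
    rw [Finset.sum_congr rfl hext, Finset.sum_comm]
    have hinner : ∀ k ∈ Finset.range (n+1),
        (∑ j ∈ Finset.range (n+1),
            ((n+1).choose j : ℚ) * ((S2 j k : ℚ) * (Nat.factorial k) * (-1) ^ k / (k + 1)))
          = (-1:ℚ)^k * (k.factorial) * S2 (n+1) (k+1) := by
      intro k _
      have hb := stirling_binom' n k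
      have hbq : (∑ j ∈ Finset.range (n+1), (((n+1).choose j : ℚ)) * (S2 j k : ℚ))
          = ((k:ℚ)+1) * (S2 (n+1) (k+1) : ℚ) := by
        exact_mod_cast congrArg (Nat.cast : ℕ → ℚ) hb
      calc ∑ j ∈ Finset.range (n+1),
            ((n+1).choose j : ℚ) * ((S2 j k : ℚ) * (Nat.factorial k) * (-1) ^ k / (k + 1))
          = (Nat.factorial k * (-1:ℚ)^k / (k+1)) *
              ∑ j ∈ Finset.range (n+1), (((n+1).choose j : ℚ)) * (S2 j k : ℚ) := by
            rw [Finset.mul_sum]; apply Finset.sum_congr rfl; intro j _; ring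
        _ = (-1:ℚ)^k * (k.factorial) * S2 (n+1) (k+1) := by
            rw [hbq]
            have : ((k:ℚ)+1) ≠ 0 := by positivity
            field_simp
    rw [Finset.sum_congr rfl hinner]
    match n with
    | 0 => norm_num [S2]
    | m + 1 =>
      rw [if_neg (by omega)]
      have hc := cancel (m+1) (by omega)
      rw [Finset.sum_range_succ, S2_eq_zero (m+2) (m+3) (by omega)] at hc
      push_cast at hc ⊢
      linarith [hc]

theorem bernoulli_eq_stirling2_sum (n : ℕ) :
    bernoulli n =
      ∑ k ∈ Finset.range (n + 1),
        (S2 n k : ℚ) * (Nat.factorial k) * (-1) ^ k / (k + 1) := by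
  induction n using Nat.strong_induction_on with
  | _ n ih =>
    show bernoulli n = Tb n
    match n with
    | 0 => simp [Tb, S2, bernoulli]
    | n + 1 =>
      have hs := sum_bernoulli (n+2)
      have hT := sum_Tb (n+2)
      rw [if_neg (by omega)] at hs hT
      rw [Finset.sum_range_succ] at hs hT
      have heq : ∑ j ∈ Finset.range (n+1), ((n+2).choose j : ℚ) * bernoulli j
          = ∑ j ∈ Finset.range (n+1), ((n+2).choose j : ℚ) * Tb j := by
        apply Finset.sum_congr rfl
        intro j hj
        rw [Finset.mem_range] at hj
        rw [ih j (by omega)]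
        rfl
      have hch : (((n+2).choose (n+1) : ℚ)) ≠ 0 := by
        rw [show n+2 = (n+1)+1 from rfl, Nat.choose_succ_self_right]
        positivity
      have : ((n+2).choose (n+1) : ℚ) * bernoulli (n+1) = ((n+2).choose (n+1) : ℚ) * Tb (n+1) := by
        linarith [hs, hT, heq]
      exact mul_left_cancel₀ hch this
end
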